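/- As formal power series, (-q;q^4)_\infty(-q^3;q^4)_\infty(-q^4;q^4)_\infty \cdot (q^2;q^2)_\infty/(-q;q^2)_\infty = \sum_{n=0}^{\infty}(-1)^{n(n+1)/2} q^{n(n+1)}. -/

import Mathlib

/-!
Since `(-q;q⁴)_∞(-q³;q⁴)_∞ = (-q;q²)_∞` and `(-q⁴;q⁴)_∞(q⁴;q⁴)_∞ = (q⁸;q⁸)_∞`, the left side is
`(q²;q⁸)_∞(q⁶;q⁸)_∞(q⁸;q⁸)_∞`. With `x = -q²` this is Jacobi's triple product
`(-a;ab)_∞(-b;ab)_∞(ab;ab)_∞ = ∑_{j ∈ ℤ} a^{j(j+1)/2} b^{j(j-1)/2}` at `a = x`, `b = x³`, and the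
exponents `2j² - j` of `x` run exactly once through the triangular numbers `k(k+1)/2`, `k ≥ 0`.

The triple product is the limit of its finite form
`(-a;ab)_N (-b;ab)_M = ∑_{j=-M}^{N} a^{j(j+1)/2} b^{j(j-1)/2} [M+N, M+j]_{ab}`, proved by induction
from the two q-Pascal recurrences; multiplied by `(ab;ab)_{M+N}`, each Gaussian binomial becomes a
product of two finite q-Pochhammer symbols that are `≡ 1` to high order.
-/

open scoped Classical

/-- Formal infinite product `∏_{k=0}^∞ f k` of power series, for families where
`f k ≡ 1 (mod q^{k+1})` (as for all q-Pochhammer factors below): the coefficient of `q^n`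
is then the (stable) coefficient of `q^n` in any partial product `∏_{k≤N} f k` with `N ≥ n`. -/
noncomputable def infProd (f : ℕ → PowerSeries ℚ) : PowerSeries ℚ :=
  PowerSeries.mk fun n => PowerSeries.coeff (R := ℚ) n (∏ k ∈ Finset.range (n + 1), f k)

/-- `(-q;q⁴)_∞` -/
noncomputable def P1 : PowerSeries ℚ :=
  infProd fun k => 1 + (PowerSeries.X : PowerSeries ℚ) ^ (4 * k + 1)
/-- `(-q³;q⁴)_∞` -/
noncomputable def P3 : PowerSeries ℚ :=
  infProd fun k => 1 + (PowerSeries.X : PowerSeries ℚ) ^ (4 * k + 3)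
/-- `(-q⁴;q⁴)_∞` -/
noncomputable def P4' : PowerSeries ℚ :=
  infProd fun k => 1 + (PowerSeries.X : PowerSeries ℚ) ^ (4 * k + 4)
/-- `(q²;q²)_∞` -/
noncomputable def P4 : PowerSeries ℚ :=
  infProd fun k => 1 - (PowerSeries.X : PowerSeries ℚ) ^ (2 * k + 2)
/-- `(-q;q²)_∞` -/
noncomputable def P5 : PowerSeries ℚ :=
  infProd fun k => 1 + (PowerSeries.X : PowerSeries ℚ) ^ (2 * k + 1)

/-- The right-hand side `∑_{n≥0} (-1)^{n(n+1)/2} q^{n(n+1)}`: its `q^m`-coefficient is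
`(-1)^{m/2}` when `m = n(n+1)` for some `n ≥ 0`, and `0` otherwise. -/
noncomputable def RHS : PowerSeries ℚ :=
  PowerSeries.mk fun m =>
    if ∃ n : ℕ, m = n * (n + 1) then (-1) ^ (m / 2) else 0

open Finset PowerSeries

section QSeries

variable {R : Type*} [CommRing R]

/-- The Gaussian binomial coefficient `[n, k]_q`, extended by zero to all `k : ℤ`. -/
def gaussBinom (q : R) : ℕ → ℤ → R
  | 0, k => if k = 0 then 1 else 0
  | n + 1, k => gaussBinom q n (k - 1) + q ^ k.toNat * gaussBinom q n k

namespace gaussBinom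

variable (q : R)

theorem zero_left (k : ℤ) : gaussBinom q 0 k = if k = 0 then 1 else 0 := rfl

theorem succ (n : ℕ) (k : ℤ) :
    gaussBinom q (n + 1) k = gaussBinom q n (k - 1) + q ^ k.toNat * gaussBinom q n k := rfl

theorem eq_zero_of_notMem {n : ℕ} {k : ℤ} (hk : k ∉ Icc 0 (n : ℤ)) : gaussBinom q n k = 0 := by
  induction n generalizing k with
  | zero => simp_all [zero_left]
  | succ n ih =>
    simp only [mem_Icc, not_and_or, not_le] at hk ih
    rw [succ, ih (by omega), ih (by omega), mul_zero, add_zero]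

theorem zero_right (n : ℕ) : gaussBinom q n 0 = 1 := by
  induction n with
  | zero => rfl
  | succ n ih => rw [succ, eq_zero_of_notMem q (by simp), ih]; simp

theorem self (n : ℕ) : gaussBinom q n n = 1 := by
  induction n with
  | zero => rfl
  | succ n ih =>
    rw [succ, eq_zero_of_notMem q (k := (n + 1 : ℕ)) (by simp)]
    push_cast
    rw [add_sub_cancel_right, ih, mul_zero, add_zero]

theorem one_sub_pow_mul_eq (n : ℕ) (k : ℤ) :
    (1 - q ^ (n - k).toNat) * gaussBinom q n k
      = (1 - q ^ (k + 1).toNat) * gaussBinom q n (k + 1) := by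
  induction n generalizing k with
  | zero =>
    by_cases hk : k = 0 <;> by_cases hk' : k + 1 = 0 <;> simp [zero_left, hk, hk']
  | succ n ih =>
    have hexp : gaussBinom q n k * q ^ (k.toNat + (n + 1 - k).toNat)
        = gaussBinom q n k * q ^ ((k + 1).toNat + (n - k).toNat) := by
      by_cases hk : k ∈ Icc 0 (n : ℤ)
      · rw [mem_Icc] at hk; congr 2; omega
      · rw [eq_zero_of_notMem q hk, zero_mul, zero_mul]
    have h1 := ih (k - 1)
    have h2 := ih k
    rw [sub_add_cancel, show (n : ℤ) - (k - 1) = n + 1 - k by ring] at h1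
    rw [succ, succ, add_sub_cancel_right]
    push_cast
    linear_combination h1 + q ^ (k + 1).toNat * h2 - hexp

theorem succ' (n : ℕ) (k : ℤ) :
    gaussBinom q (n + 1) k = q ^ (n + 1 - k).toNat * gaussBinom q n (k - 1) + gaussBinom q n k := by
  have h := one_sub_pow_mul_eq q n (k - 1)
  rw [sub_add_cancel, show (n : ℤ) - (k - 1) = n + 1 - k by ring] at h
  rw [succ]
  linear_combination h

theorem symm (n : ℕ) (k : ℤ) : gaussBinom q n (n - k) = gaussBinom q n k := by
  induction n generalizing k with
  | zero => simp [zero_left]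
  | succ n ih =>
    have h1 := ih k
    have h2 := ih (k - 1)
    rw [show (n : ℤ) - (k - 1) = n + 1 - k by ring] at h2
    rw [succ, succ', Nat.cast_succ, show (n : ℤ) + 1 - k - 1 = n - k by ring, h1, h2]
    ring

end gaussBinom

def qPochhammer (a q : R) (n : ℕ) : R := ∏ i ∈ range n, (1 - a * q ^ i)

namespace qPochhammer

variable (a q : R)

@[simp] theorem zero : qPochhammer a q 0 = 1 := prod_range_zero _

theorem succ (n : ℕ) : qPochhammer a q (n + 1) = qPochhammer a q n * (1 - a * q ^ n) :=
  prod_range_succ _ _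

theorem succ' (n : ℕ) : qPochhammer a q (n + 1) = (1 - a) * qPochhammer (a * q) q n := by
  rw [qPochhammer, prod_range_succ', pow_zero, mul_one, mul_comm]
  simp only [qPochhammer, pow_succ, mul_assoc, mul_comm q]

theorem add (m n : ℕ) :
    qPochhammer a q (m + n) = qPochhammer a q m * qPochhammer (a * q ^ m) q n := by
  simp only [qPochhammer, prod_range_add, pow_add, mul_assoc, mul_comm (q ^ m)]

theorem mul_gaussBinom (k l : ℕ) :
    qPochhammer q q l * gaussBinom q (k + l) k = qPochhammer (q ^ (k + 1)) q l := by
  induction k generalizing l with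
  | zero => simp [gaussBinom.zero_right]
  | succ k ihk =>
    induction l with
    | zero => simpa using gaussBinom.self q (k + 1)
    | succ l ihl =>
      have h1 := ihk (l + 1)
      rw [succ' (q ^ (k + 1)), ← pow_succ] at h1
      rw [show k + 1 + (l + 1) = k + (l + 1) + 1 by ring, gaussBinom.succ, Nat.cast_succ,
        add_sub_cancel_right, show ((k : ℤ) + 1).toNat = k + 1 by omega, succ q q, succ,
        show k + (l + 1) = k + 1 + l by ring]
      rw [show k + (l + 1) = k + 1 + l by ring, succ q q] at h1
      push_cast at ihl
      linear_combination h1 + q ^ (k + 1) * (1 - q ^ (l + 1)) * ihl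

theorem add_mul_gaussBinom (k l : ℕ) :
    qPochhammer q q (k + l) * gaussBinom q (k + l) k
      = qPochhammer (q ^ (l + 1)) q k * qPochhammer (q ^ (k + 1)) q l := by
  rw [← mul_gaussBinom q k l, ← mul_assoc, mul_comm (qPochhammer (q ^ (l + 1)) q k), pow_succ',
    ← add, add_comm l k]

theorem mk_eq_one {I : Ideal R} (ha : a ∈ I) (n : ℕ) :
    Ideal.Quotient.mk I (qPochhammer a q n) = 1 := by
  simp [qPochhammer, map_prod, Ideal.Quotient.eq_zero_iff_mem.2 ha]

end qPochhammer

def tri (j : ℤ) : ℕ := (j * (j + 1) / 2).toNat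

theorem two_mul_tri (j : ℤ) : 2 * (tri j : ℤ) = j * (j + 1) := by
  have h0 : 0 ≤ j * (j + 1) := by rcases le_or_gt 0 j with h | h <;> nlinarith
  rw [tri, Int.toNat_of_nonneg (Int.ediv_nonneg h0 zero_le_two),
    Int.mul_ediv_cancel' (even_iff_two_dvd.1 (Int.even_mul_succ_self j))]

theorem two_mul_tri_natCast (k : ℕ) : 2 * tri k = k * (k + 1) := by
  exact_mod_cast two_mul_tri k

theorem cast_tri_succ (j : ℤ) : (tri (j + 1) : ℤ) = tri j + j + 1 := by
  linarith [two_mul_tri j, two_mul_tri (j + 1)]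

theorem cast_tri_neg_succ (j : ℤ) : (tri (-(j + 1)) : ℤ) = tri (-j) + j := by
  linarith [two_mul_tri (-j), two_mul_tri (-(j + 1))]

-- `tri (-j) = j(j-1)/2`: the finite form of Ramanujan's `f(a, b)`.
noncomputable def tripleProductSum (a b : R) (N M : ℕ) : R :=
  ∑ j ∈ Icc (-(M : ℤ)) N, a ^ tri j * b ^ tri (-j) * gaussBinom (a * b) (M + N) (M + j)

namespace tripleProductSum

variable (a b : R)

theorem eq_sum_of_subset {N M : ℕ} {s : Finset ℤ} (hs : Icc (-(M : ℤ)) N ⊆ s) :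
    tripleProductSum a b N M
      = ∑ j ∈ s, a ^ tri j * b ^ tri (-j) * gaussBinom (a * b) (M + N) (M + j) := by
  refine sum_subset hs fun j _ hj => ?_
  rw [gaussBinom.eq_zero_of_notMem _ (by simp only [mem_Icc] at hj ⊢; push_cast; omega),
    mul_zero]

theorem comm (N M : ℕ) : tripleProductSum a b N M = tripleProductSum b a M N := by
  refine sum_nbij' (fun j => -j) (fun j => -j) (by simp only [mem_Icc]; omega)
    (by simp only [mem_Icc]; omega) (fun j _ => neg_neg j) (fun j _ => neg_neg j) fun j _ => ?_
  rw [neg_neg, mul_comm b a, mul_comm (b ^ _), add_comm N M,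
    show (N : ℤ) + -j = ((M + N : ℕ) : ℤ) - (M + j) by push_cast; ring, gaussBinom.symm]

theorem succ_right (N M : ℕ) :
    tripleProductSum a b N (M + 1) = (1 + b * (a * b) ^ M) * tripleProductSum a b N M := by
  set s := Icc (-(M : ℤ) - 1) N
  have hshift : ∀ j ∈ s, a ^ tri j * b ^ tri (-j)
      * ((a * b) ^ (M + 1 + j).toNat * gaussBinom (a * b) (M + N) (M + 1 + j))
      = b * (a * b) ^ M
        * (a ^ tri (j + 1) * b ^ tri (-(j + 1)) * gaussBinom (a * b) (M + N) (M + (j + 1))) := by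
    intro j hj
    have ha := cast_tri_succ j
    have hb := cast_tri_neg_succ j
    rw [mem_Icc] at hj
    have e1 : tri j + (M + 1 + j).toNat = tri (j + 1) + M := by omega
    have e2 : tri (-j) + (M + 1 + j).toNat = tri (-(j + 1)) + M + 1 := by omega
    calc _ = a ^ (tri j + (M + 1 + j).toNat) * b ^ (tri (-j) + (M + 1 + j).toNat)
          * gaussBinom (a * b) (M + N) (M + 1 + j) := by ring
      _ = _ := by rw [e1, e2, show (M : ℤ) + 1 + j = M + (j + 1) by ring]; ring
  calc tripleProductSum a b N (M + 1)
      = ∑ j ∈ s, a ^ tri j * b ^ tri (-j) * gaussBinom (a * b) (M + N + 1) (M + 1 + j) := by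
        simp only [tripleProductSum, s]; push_cast; ring_nf
    _ = tripleProductSum a b N M + ∑ j ∈ s, a ^ tri j * b ^ tri (-j)
          * ((a * b) ^ (M + 1 + j).toNat * gaussBinom (a * b) (M + N) (M + 1 + j)) := by
        rw [eq_sum_of_subset a b (s := s) (Icc_subset_Icc (by omega) le_rfl), ← sum_add_distrib]
        refine sum_congr rfl fun j _ => ?_
        rw [gaussBinom.succ, show (M : ℤ) + 1 + j - 1 = M + j by ring]
        ring
    _ = tripleProductSum a b N M + b * (a * b) ^ M * ∑ j ∈ Icc (-(M : ℤ)) (N + 1),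
          a ^ tri j * b ^ tri (-j) * gaussBinom (a * b) (M + N) (M + j) := by
        rw [sum_congr rfl hshift, ← mul_sum,
          show Icc (-(M : ℤ)) (N + 1) = s.image (· + 1) by rw [image_add_right_Icc, sub_add_cancel],
          sum_image (by simp)]
    _ = (1 + b * (a * b) ^ M) * tripleProductSum a b N M := by
        rw [← eq_sum_of_subset a b (Icc_subset_Icc le_rfl (by omega))]
        ring

theorem succ_left (N M : ℕ) :
    tripleProductSum a b (N + 1) M = (1 + a * (a * b) ^ N) * tripleProductSum a b N M := by
  rw [comm, succ_right, comm, mul_comm b a]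

theorem zero_zero : tripleProductSum a b 0 0 = 1 := by
  simp [tripleProductSum, tri, gaussBinom.zero_left]

end tripleProductSum

theorem qPochhammer_mul_qPochhammer_eq_tripleProductSum (a b : R) (N M : ℕ) :
    qPochhammer (-a) (a * b) N * qPochhammer (-b) (a * b) M = tripleProductSum a b N M := by
  induction N with
  | zero =>
    induction M with
    | zero => simp [tripleProductSum.zero_zero]
    | succ M ih => rw [qPochhammer.succ, tripleProductSum.succ_right, ← ih]; ring
  | succ N ih => rw [qPochhammer.succ, tripleProductSum.succ_left, ← ih]; ring

end QSeries

noncomputable abbrev modXPow {R : Type*} [CommRing R] (n : ℕ) :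
    R⟦X⟧ →+* R⟦X⟧ ⧸ Ideal.span {(X : R⟦X⟧) ^ n} :=
  Ideal.Quotient.mk _

namespace modXPow

variable {R : Type*} [CommRing R] {n : ℕ} {φ ψ : R⟦X⟧}

theorem eq_iff_dvd : modXPow n φ = modXPow n ψ ↔ X ^ n ∣ φ - ψ := by
  rw [Ideal.Quotient.eq, Ideal.mem_span_singleton]

theorem eq_iff_coeff : modXPow n φ = modXPow n ψ ↔ ∀ m < n, coeff m φ = coeff m ψ := by
  simp only [eq_iff_dvd, X_pow_dvd_iff, map_sub, sub_eq_zero]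

theorem eq_one_of_dvd {m : ℕ} (hφ : X ^ m ∣ φ - 1) (h : n ≤ m) : modXPow n φ = 1 := by
  rw [← map_one (modXPow n), eq_iff_dvd]
  exact (pow_dvd_pow X h).trans hφ

theorem mul_eq_of_dvd {e m : ℕ} (hφ : X ^ e ∣ φ) (hψ : X ^ m ∣ ψ - 1) (h : n ≤ e + m) :
    modXPow n (φ * ψ) = modXPow n φ := by
  rw [eq_iff_dvd, ← mul_sub_one]
  exact (pow_dvd_pow X h).trans (pow_add (X : R⟦X⟧) e m ▸ mul_dvd_mul hφ hψ)

theorem ext (h : ∀ n, modXPow n φ = modXPow n ψ) : φ = ψ :=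
  PowerSeries.ext fun n => eq_iff_coeff.1 (h (n + 1)) n n.lt_succ_self

end modXPow

theorem sum_Icc_tri_add_three_mul_tri_neg {M : Type*} [AddCommMonoid M] (f : ℕ → M) (L : ℕ) :
    ∑ j ∈ Icc (-(L : ℤ)) L, f (tri j + 3 * tri (-j)) = ∑ k ∈ range (2 * L + 1), f (tri k) := by
  refine sum_nbij' (fun j => (if j ≤ 0 then -2 * j else 2 * j - 1).toNat)
    (fun k => if k % 2 = 0 then -((k / 2 : ℕ) : ℤ) else (k / 2 : ℕ) + 1)
    (fun j hj => by simp only [mem_Icc, mem_range] at hj ⊢; split_ifs <;> omega)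
    (fun k hk => by simp only [mem_Icc, mem_range] at hk ⊢; split_ifs <;> omega)
    (fun j _ => by split_ifs <;> omega) (fun k _ => by split_ifs <;> omega)
    fun j _ => ?_
  congr 1
  apply Nat.cast_injective (R := ℤ)
  push_cast
  have h1 := two_mul_tri j
  have h2 := two_mul_tri (-j)
  split_ifs with hj
  · have h3 := two_mul_tri (-2 * j)
    rw [Int.toNat_of_nonneg (by omega)]
    linarith
  · have h3 := two_mul_tri (2 * j - 1)
    rw [Int.toNat_of_nonneg (by omega)]
    linarith

section PowerSeries

variable {R : Type*} [CommRing R]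

theorem X_pow_dvd_qPochhammer_mul_gaussBinom_sub_one {q : R⟦X⟧} {d : ℕ} (hq : X ^ d ∣ q)
    (k l : ℕ) : X ^ (d * (min k l + 1)) ∣ qPochhammer q q (k + l) * gaussBinom q (k + l) k - 1 := by
  have hpow : ∀ i, min k l + 1 ≤ i → q ^ i ∈ Ideal.span {(X : R⟦X⟧) ^ (d * (min k l + 1))} :=
    fun i hi => Ideal.mem_span_singleton.2 <|
      (pow_dvd_pow X (Nat.mul_le_mul_left d hi)).trans
        (pow_mul (X : R⟦X⟧) d i ▸ pow_dvd_pow_of_dvd hq i)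
  rw [qPochhammer.add_mul_gaussBinom, ← Ideal.mem_span_singleton, ← Ideal.Quotient.eq, map_mul,
    map_one, qPochhammer.mk_eq_one _ _ (hpow _ (by omega)),
    qPochhammer.mk_eq_one _ _ (hpow _ (by omega)), one_mul]

theorem modXPow_qPochhammer_mul_tripleProductSum {x : R⟦X⟧} (hx : X ∣ x) {n L : ℕ}
    (hn : n ≤ L) :
    modXPow n (qPochhammer (x ^ 4) (x ^ 4) (L + L) * tripleProductSum x (x ^ 3) L L)
      = modXPow n (∑ k ∈ range (2 * L + 1), x ^ tri k) := by
  rw [tripleProductSum, mul_sum, map_sum, map_sum,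
    ← sum_Icc_tri_add_three_mul_tri_neg (fun e => modXPow n (x ^ e)) L]
  refine sum_congr rfl fun j hj => ?_
  rw [mem_Icc] at hj
  obtain ⟨k, hk⟩ : ∃ k : ℕ, (L : ℤ) + j = k := ⟨(L + j).toNat, by omega⟩
  obtain ⟨l, hl⟩ : ∃ l : ℕ, (L : ℤ) - j = l := ⟨(L - j).toNat, by omega⟩
  have hbound : n ≤ tri j + 3 * tri (-j) + 4 * (min k l + 1) := by
    have h1 := two_mul_tri j
    have h2 := two_mul_tri (-j)
    rcases le_total k l with h | h
    · rw [min_eq_left h]; zify; nlinarith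
    · rw [min_eq_right h]; zify; nlinarith
  calc modXPow n (qPochhammer (x ^ 4) (x ^ 4) (L + L)
        * (x ^ tri j * (x ^ 3) ^ tri (-j) * gaussBinom (x * x ^ 3) (L + L) (L + j)))
      = modXPow n (x ^ (tri j + 3 * tri (-j))
          * (qPochhammer (x ^ 4) (x ^ 4) (k + l) * gaussBinom (x ^ 4) (k + l) k)) := by
        rw [hk, show L + L = k + l by omega, ← pow_succ']
        ring_nf
    _ = modXPow n (x ^ (tri j + 3 * tri (-j))) :=
        modXPow.mul_eq_of_dvd (pow_dvd_pow_of_dvd hx _)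
          (X_pow_dvd_qPochhammer_mul_gaussBinom_sub_one (pow_dvd_pow_of_dvd hx 4) k l) hbound

theorem X_pow_dvd_one_add_X_pow_sub_one {n e : ℕ} (h : n ≤ e) :
    (X : R⟦X⟧) ^ n ∣ 1 + X ^ e - 1 := by
  simpa using pow_dvd_pow X h

theorem X_pow_dvd_one_sub_X_pow_sub_one {n e : ℕ} (h : n ≤ e) :
    (X : R⟦X⟧) ^ n ∣ 1 - X ^ e - 1 := by
  simpa using pow_dvd_pow X h

end PowerSeries

theorem Finset.prod_range_two_mul {M : Type*} [CommMonoid M] (f : ℕ → M) (n : ℕ) :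
    ∏ k ∈ range (2 * n), f k = (∏ k ∈ range n, f (2 * k)) * ∏ k ∈ range n, f (2 * k + 1) := by
  induction n with
  | zero => simp
  | succ n ih =>
    rw [show 2 * (n + 1) = 2 * n + 1 + 1 by ring, prod_range_succ, prod_range_succ, ih,
      prod_range_succ, prod_range_succ]
    ac_rfl

section infProd

variable {f g : ℕ → ℚ⟦X⟧}

theorem modXPow_prod_range (hf : ∀ k, X ^ (k + 1) ∣ f k - 1) {n N : ℕ} (h : n ≤ N) :
    modXPow n (∏ k ∈ range N, f k) = modXPow n (∏ k ∈ range n, f k) := by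
  have htail : modXPow n (∏ k ∈ Ico n N, f k) = 1 := by
    rw [map_prod]
    exact prod_eq_one fun k hk => modXPow.eq_one_of_dvd (hf k) (by rw [mem_Ico] at hk; omega)
  rw [← prod_range_mul_prod_Ico f h, map_mul, htail, mul_one]

theorem modXPow_infProd (hf : ∀ k, X ^ (k + 1) ∣ f k - 1) {n N : ℕ} (h : n ≤ N) :
    modXPow n (infProd f) = modXPow n (∏ k ∈ range N, f k) := by
  refine modXPow.eq_iff_coeff.2 fun m hm => ?_
  rw [infProd, coeff_mk]
  exact (modXPow.eq_iff_coeff.1 (modXPow_prod_range hf (by omega : m + 1 ≤ N)) m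
    m.lt_succ_self).symm

theorem infProd_mul (hf : ∀ k, X ^ (k + 1) ∣ f k - 1) (hg : ∀ k, X ^ (k + 1) ∣ g k - 1) :
    infProd f * infProd g = infProd fun k => f k * g k := by
  have hfg : ∀ k, X ^ (k + 1) ∣ f k * g k - 1 := fun k => by
    rw [show f k * g k - 1 = f k * (g k - 1) + (f k - 1) by ring]
    exact dvd_add (dvd_mul_of_dvd_right (hg k) _) (hf k)
  refine modXPow.ext fun n => ?_
  rw [map_mul, modXPow_infProd hf le_rfl, modXPow_infProd hg le_rfl, modXPow_infProd hfg le_rfl,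
    ← map_mul, prod_mul_distrib]

theorem infProd_even_mul_infProd_odd (hf : ∀ k, X ^ (k + 1) ∣ f k - 1) :
    (infProd fun k => f (2 * k)) * (infProd fun k => f (2 * k + 1)) = infProd f := by
  have hev : ∀ k, X ^ (k + 1) ∣ f (2 * k) - 1 := fun k =>
    (pow_dvd_pow X (by omega)).trans (hf (2 * k))
  have hodd : ∀ k, X ^ (k + 1) ∣ f (2 * k + 1) - 1 := fun k =>
    (pow_dvd_pow X (by omega)).trans (hf (2 * k + 1))
  refine modXPow.ext fun n => ?_
  rw [map_mul, modXPow_infProd hev le_rfl, modXPow_infProd hodd le_rfl, ← map_mul,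
    ← prod_range_two_mul, modXPow_infProd hf (N := 2 * n) (by omega)]

end infProd

theorem P1_mul_P3 : P1 * P3 = P5 := by
  rw [P5, ← infProd_even_mul_infProd_odd fun k => X_pow_dvd_one_add_X_pow_sub_one (by omega)]
  simp only [P1, P3, show ∀ k, 2 * (2 * k) + 1 = 4 * k + 1 from fun k => by ring,
    show ∀ k, 2 * (2 * k + 1) + 1 = 4 * k + 3 from fun k => by ring]

theorem P4'_mul_P4 : P4' * P4 = (infProd fun k => 1 - X ^ (8 * k + 2))
    * (infProd fun k => 1 - X ^ (8 * k + 6)) * infProd fun k => 1 - X ^ (8 * k + 8) := by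
  have hP4 :
      P4 = (infProd fun k => 1 - X ^ (4 * k + 2)) * infProd fun k => 1 - X ^ (4 * k + 4) := by
    rw [P4, ← infProd_even_mul_infProd_odd fun k => X_pow_dvd_one_sub_X_pow_sub_one (by omega)]
    simp only [show ∀ k, 2 * (2 * k) + 2 = 4 * k + 2 from fun k => by ring,
      show ∀ k, 2 * (2 * k + 1) + 2 = 4 * k + 4 from fun k => by ring]
  have h2 : (infProd fun k => 1 - X ^ (4 * k + 2) : ℚ⟦X⟧)
      = (infProd fun k => 1 - X ^ (8 * k + 2)) * infProd fun k => 1 - X ^ (8 * k + 6) := by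
    rw [← infProd_even_mul_infProd_odd fun k => X_pow_dvd_one_sub_X_pow_sub_one (by omega)]
    simp only [show ∀ k, 4 * (2 * k) + 2 = 8 * k + 2 from fun k => by ring,
      show ∀ k, 4 * (2 * k + 1) + 2 = 8 * k + 6 from fun k => by ring]
  have h4 :
      P4' * (infProd fun k => 1 - X ^ (4 * k + 4)) = infProd fun k => 1 - X ^ (8 * k + 8) := by
    rw [P4', infProd_mul (fun k => X_pow_dvd_one_add_X_pow_sub_one (by omega))
      (fun k => X_pow_dvd_one_sub_X_pow_sub_one (by omega))]
    congr 1
    funext k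
    ring
  rw [hP4, h2, ← h4]
  ring

theorem modXPow_RHS {n K : ℕ} (h : n ≤ K) :
    modXPow n RHS = modXPow n (∑ k ∈ range K, (-X ^ 2 : ℚ⟦X⟧) ^ tri k) := by
  have hterm : ∀ k : ℕ, (-X ^ 2 : ℚ⟦X⟧) ^ tri k = C ((-1) ^ tri k) * X ^ (k * (k + 1)) := by
    intro k
    rw [neg_pow, ← pow_mul, map_pow, map_neg, map_one, two_mul_tri_natCast]
  have hinj : Function.Injective fun k : ℕ => k * (k + 1) :=
    (strictMono_nat_of_lt_succ fun k => by nlinarith).injective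
  refine modXPow.eq_iff_coeff.2 fun m hm => ?_
  simp only [RHS, coeff_mk, map_sum, hterm, coeff_C_mul_X_pow]
  split_ifs with hex
  · obtain ⟨i, rfl⟩ := hex
    rw [sum_eq_single i (fun k _ hk => if_neg fun h => hk (hinj h.symm))
      (fun hi => absurd (mem_range.2 (by nlinarith)) hi), if_pos rfl]
    have := two_mul_tri_natCast i
    rw [show i * (i + 1) / 2 = tri i by omega]
  · exact (sum_eq_zero fun k _ => if_neg fun h => hex ⟨k, h⟩).symm

theorem tripleProduct_eq_RHS : (infProd fun k => 1 - X ^ (8 * k + 2))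
    * (infProd fun k => 1 - X ^ (8 * k + 6)) * (infProd fun k => 1 - X ^ (8 * k + 8)) = RHS := by
  refine modXPow.ext fun n => ?_
  set x : ℚ⟦X⟧ := -X ^ 2
  have e1 : ∏ k ∈ range n, (1 - X ^ (8 * k + 2)) = qPochhammer (-x) (x * x ^ 3) n :=
    prod_congr rfl fun k _ => by ring
  have e2 : ∏ k ∈ range n, (1 - X ^ (8 * k + 6)) = qPochhammer (-(x ^ 3)) (x * x ^ 3) n :=
    prod_congr rfl fun k _ => by ring
  have e3 : ∏ k ∈ range (n + n), (1 - X ^ (8 * k + 8)) = qPochhammer (x ^ 4) (x ^ 4) (n + n) :=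
    prod_congr rfl fun k _ => by ring
  rw [map_mul, map_mul,
    modXPow_infProd (fun k => X_pow_dvd_one_sub_X_pow_sub_one (by omega)) le_rfl,
    modXPow_infProd (fun k => X_pow_dvd_one_sub_X_pow_sub_one (by omega)) le_rfl,
    modXPow_infProd (fun k => X_pow_dvd_one_sub_X_pow_sub_one (by omega)) (N := n + n) (by omega),
    ← map_mul, ← map_mul, e1, e2, e3, qPochhammer_mul_qPochhammer_eq_tripleProductSum, mul_comm,
    modXPow_qPochhammer_mul_tripleProductSum (dvd_neg.2 (dvd_pow_self X two_ne_zero)) le_rfl,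
    modXPow_RHS (K := 2 * n + 1) (by omega)]

/-- `(-q;q⁴)_∞(-q³;q⁴)_∞(-q⁴;q⁴)_∞ · (q²;q²)_∞/(-q;q²)_∞ = ∑ (-1)^{n(n+1)/2} q^{n(n+1)}`. -/
theorem stmt_10 : P1 * P3 * P4' * (P4 * P5⁻¹) = RHS := by
  have hP5 : P5 * P5⁻¹ = 1 := by
    refine PowerSeries.mul_inv_cancel _ ?_
    rw [← coeff_zero_eq_constantCoeff_apply, P5, infProd, coeff_mk]
    simp
  calc P1 * P3 * P4' * (P4 * P5⁻¹) = P1 * P3 * P5⁻¹ * (P4' * P4) := by ring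
    _ = RHS := by rw [P1_mul_P3, hP5, one_mul, P4'_mul_P4, tripleProduct_eq_RHS]
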